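/- arXiv:1912.09724 — 2 statements merged into one kernel-verified Lean document; each statement's English description precedes it below -/
import Mathlib

section
/- For every injection sequence s, the corresponding belt function of s is a belt assignment; that is, it satisfies conditions (i), (ii) and (iii). -/
open Finset

variable {α : Type*}

/-- A mould of type `A` is injected in step `i`: `b i = A` and either `i < N`
or the slot `N` steps earlier did not carry `A`. -/
def Injected (N : ℕ) (b : ℕ → Option α) (A : α) (i : ℕ) : Prop :=
  b i = some A ∧ (i < N ∨ b (i - N) ≠ some A)

/-- The number of moulds of type `A` used by the belt function `b`. -/
noncomputable def MouldsUsed (N : ℕ) (b : ℕ → Option α) (A : α) : ℕ :=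
  {i | Injected N b A i}.ncard

/-- A belt assignment: (i) each type `A` occurs exactly `d A` times, (ii) an
injected mould stays on the belt (period `N`) until the demand of its type is
met, (iii) at most `c A` moulds of type `A` are used. -/
def IsBeltAssignment (N : ℕ) (d c : α → ℕ) (b : ℕ → Option α) : Prop :=
  (∀ A : α, {i | b i = some A}.Finite) ∧
  (∀ A : α, {i | b i = some A}.ncard = d A) ∧
  (∀ (i : ℕ) (A : α), b i = some A →
      b (i + N) = some A ∨ {j | b j = some A ∧ j < i + N}.ncard = d A) ∧
  (∀ A : α, MouldsUsed N b A ≤ c A)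

/-- The makespan of `b`: the smallest `s` such that for every type `A` all of
its demand appears among steps `0, …, s - N - 1`. -/
noncomputable def Makespan (N : ℕ) (d : α → ℕ) (b : ℕ → Option α) : ℕ :=
  sInf {s | ∀ A : α, {j | b j = some A ∧ j < s - N}.ncard = d A}

/-- Property (E): every injection happens before every empty slot. -/
def PropE (N : ℕ) (b : ℕ → Option α) : Prop :=
  ∀ (A : α) (i e : ℕ), Injected N b A i → b e = none → i < e

/-- Property (F): if there is an empty slot `e` and strictly fewer than `c A`
moulds of type `A` are used, then `A` does not occur at any step `i ≥ e`. -/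
def PropF (N : ℕ) (c : α → ℕ) (b : ℕ → Option α) : Prop :=
  ∀ (e : ℕ) (A : α), b e = none → MouldsUsed N b A < c A → ∀ i, e ≤ i → b i ≠ some A

section CorrespondingBelt

variable [Fintype α] [DecidableEq α]

/-- One step of the greedy construction of the belt function corresponding to
an injection sequence. `pre` is the list of slots assigned so far (slot `i`
for `i < pre.length`), `rem` is the not-yet-used tail of the injection
sequence (the pointer position). If the total demand is met, the slot stays
empty. Otherwise, if the slot `N` steps earlier carries a type whose demand
is not yet met, that type stays in the slot. Otherwise the pointer is
advanced past all moulds whose type's demand is already met and, if a mould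
remains, it is injected; else the slot stays empty. -/
def beltStep (N : ℕ) (d : α → ℕ) (pre : List (Option α)) (rem : List α) :
    Option α × List α :=
  if pre.reduceOption.length = ∑ A : α, d A then (none, rem)
  else if N ≤ pre.length ∧
      ∃ A : α, pre.getD (pre.length - N) none = some A ∧ pre.count (some A) < d A then
    (pre.getD (pre.length - N) none, rem)
  else
    match rem.dropWhile (fun A => decide (d A ≤ pre.count (some A))) with
    | [] => (none, [])
    | A :: t => (some A, t)

/-- The state (assigned slots, remaining injection sequence) after `i` steps
of the greedy construction. -/
def beltState (N : ℕ) (d : α → ℕ) (s : List α) : ℕ → List (Option α) × List α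
  | 0 => ([], s)
  | i + 1 =>
      let p := beltState N d s i
      let q := beltStep N d p.1 p.2
      (p.1 ++ [q.1], q.2)

/-- The belt function corresponding to the injection sequence `s`. -/
def corrBelt (N : ℕ) (d : α → ℕ) (s : List α) (i : ℕ) : Option α :=
  (beltState N d s (i + 1)).1.getD i none

end CorrespondingBelt

/-!
Write `cnt A i` for the number of slots `j < i` carrying `A`. The greedy step only places types
whose demand is still unmet, so `cnt A i ≤ d A`, and it keeps a slot's type exactly while that
demand is unmet, which is (ii). An injection is never a kept slot, so it is served by the pointer,
which moves forward through `s` consuming one entry `A` each time; hence (iii).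
For (i): if `A` is unmet at step `i`, then either a copy of `A` lies in the last `N` slots, and it
is kept or `A` gets completed by step `i + N`, or `A` is still ahead of the pointer and slot `i`
is filled. Either way `∑ A, cnt A` grows within `N` steps, so all demands are met by step
`N * ∑ A, d A`, and from then on every slot is empty.
-/

namespace List

variable {β : Type*}

theorem mem_dropWhile_of_mem {p : β → Bool} {l : List β} {a : β} (h : a ∈ l) (hp : p a = false) :
    a ∈ l.dropWhile p := by
  rw [← takeWhile_append_dropWhile (p := p) (l := l), mem_append] at h
  exact h.resolve_left fun ha => by simpa [hp] using mem_takeWhile_imp ha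

theorem eq_false_of_dropWhile_eq_cons {p : β → Bool} {l t : List β} {a : β}
    (h : l.dropWhile p = a :: t) : p a = false := by
  simpa [h] using head_dropWhile_not p (l := l) (by simp [h])

theorem length_reduceOption_eq_sum_count [Fintype β] [DecidableEq β] (l : List (Option β)) :
    l.reduceOption.length = ∑ B, l.count (some B) := by
  induction l with
  | nil => simp
  | cons x t ih =>
    cases x with
    | none => simpa [count_cons] using ih
    | some B => simp [count_cons, ih, sum_add_distrib]

theorem getD_map_range (f : ℕ → β) (x : β) {i j : ℕ} (hj : j < i) :
    ((range i).map f).getD j x = f j := by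
  rw [getD_eq_getElem?_getD, getElem?_map, getElem?_range hj]
  rfl

end List

theorem Set.ncard_setOf_and_lt (p : ℕ → Prop) [DecidablePred p] (n : ℕ) :
    {j | p j ∧ j < n}.ncard = Nat.count p n := by
  rw [Nat.count_eq_card_filter_range, ← Set.ncard_coe_finset]
  congr 1
  ext j
  simp [and_comm]

section BeltStep

variable [Fintype α] [DecidableEq α] {N : ℕ} {d : α → ℕ} {pre : List (Option α)}
  {rem : List α} {A : α}

theorem beltStep_of_forall_count_eq (h : ∀ B, pre.count (some B) = d B) :
    beltStep N d pre rem = (none, rem) := by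
  rw [beltStep, if_pos (by simp only [List.length_reduceOption_eq_sum_count, h])]

theorem length_reduceOption_ne_of_count_lt (hle : ∀ B, pre.count (some B) ≤ d B)
    (hlt : pre.count (some A) < d A) : pre.reduceOption.length ≠ ∑ B, d B := by
  rw [List.length_reduceOption_eq_sum_count]
  exact (sum_lt_sum (fun B _ => hle B) ⟨A, mem_univ A, hlt⟩).ne

theorem beltStep_of_keep (hle : ∀ B, pre.count (some B) ≤ d B) (hlt : pre.count (some A) < d A)
    (hN : N ≤ pre.length) (hA : pre.getD (pre.length - N) none = some A) :
    beltStep N d pre rem = (some A, rem) := by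
  rw [beltStep, if_neg (length_reduceOption_ne_of_count_lt hle hlt), if_pos ⟨hN, A, hA, hlt⟩, hA]

theorem count_lt_of_fst_beltStep_eq_some (h : (beltStep N d pre rem).1 = some A) :
    pre.count (some A) < d A := by
  rw [beltStep] at h
  split_ifs at h with _ hkeep
  · obtain ⟨-, B, hB, hlt⟩ := hkeep
    obtain rfl : B = A := Option.some_inj.1 (hB.symm.trans h)
    exact hlt
  · split at h
    · cases h
    · next B t hdw =>
      obtain rfl : B = A := Option.some_inj.1 h
      simpa using List.eq_false_of_dropWhile_eq_cons hdw

theorem snd_beltStep_suffix : (beltStep N d pre rem).2 <:+ rem := by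
  rw [beltStep]
  split_ifs
  · exact List.suffix_refl rem
  · exact List.suffix_refl rem
  · split
    · exact List.nil_suffix
    · next B t hdw => exact (List.suffix_cons B t).trans (hdw ▸ List.dropWhile_suffix _)

theorem cons_snd_beltStep_suffix (h : (beltStep N d pre rem).1 = some A)
    (hnk : ¬(N ≤ pre.length ∧ pre.getD (pre.length - N) none = some A)) :
    A :: (beltStep N d pre rem).2 <:+ rem := by
  rw [beltStep] at h ⊢
  split_ifs at h ⊢ with _ hkeep
  · exact absurd ⟨hkeep.1, h⟩ hnk
  · split
    · next hdw => simp [hdw] at h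
    · next B t hdw =>
      obtain rfl : B = A := by simpa [hdw] using h
      exact hdw ▸ List.dropWhile_suffix _

theorem exists_fst_beltStep_eq_some (hle : ∀ B, pre.count (some B) ≤ d B)
    (hlt : pre.count (some A) < d A) (hA : A ∈ rem) :
    ∃ B, (beltStep N d pre rem).1 = some B ∧ (B = A ∨ A ∈ (beltStep N d pre rem).2) := by
  rw [beltStep, if_neg (length_reduceOption_ne_of_count_lt hle hlt)]
  split_ifs with hkeep
  · obtain ⟨-, B, hB, -⟩ := hkeep
    exact ⟨B, hB, Or.inr hA⟩
  · have hA' : A ∈ rem.dropWhile (fun B => decide (d B ≤ pre.count (some B))) :=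
      List.mem_dropWhile_of_mem hA (by simpa using hlt)
    split
    · next hdw => simp [hdw] at hA'
    · next B t hdw =>
      rw [hdw, List.mem_cons] at hA'
      exact ⟨B, rfl, hA'.imp Eq.symm id⟩

end BeltStep

section CountBefore

variable [DecidableEq α] (b : ℕ → Option α) (A : α)

def countBefore (i : ℕ) : ℕ := Nat.count (fun j => b j = some A) i

theorem countBefore_succ (i : ℕ) :
    countBefore b A (i + 1) = countBefore b A i + if b i = some A then 1 else 0 :=
  Nat.count_succ _ i

theorem countBefore_mono : Monotone (countBefore b A) := Nat.count_monotone _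

theorem ncard_setOf_eq_some_and_lt (n : ℕ) :
    {j | b j = some A ∧ j < n}.ncard = countBefore b A n :=
  Set.ncard_setOf_and_lt _ n

theorem count_map_range (i : ℕ) : ((List.range i).map b).count (some A) = countBefore b A i := by
  rw [countBefore, Nat.count, List.count, List.countP_map]
  exact List.countP_congr fun j _ => by simp

variable [Fintype α] {b A}

theorem sum_countBefore_lt {i k : ℕ} (hik : i ≤ k) (h : countBefore b A i < countBefore b A k) :
    ∑ B, countBefore b B i < ∑ B, countBefore b B k :=
  sum_lt_sum (fun B _ => countBefore_mono b B hik) ⟨A, mem_univ A, h⟩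

end CountBefore

section CorrBelt

variable [Fintype α] [DecidableEq α] {N : ℕ} {d : α → ℕ} {s : List α} {A : α}

theorem beltState_fst : ∀ i, (beltState N d s i).1 = (List.range i).map (corrBelt N d s)
  | 0 => rfl
  | i + 1 => by
    have ih := beltState_fst i
    have hq : corrBelt N d s i = (beltStep N d (beltState N d s i).1 (beltState N d s i).2).1 := by
      simp [corrBelt, beltState, ih]
    simp [beltState, ih, List.range_succ, hq]

theorem corrBelt_eq_fst_beltStep (i : ℕ) :
    corrBelt N d s i =
      (beltStep N d ((List.range i).map (corrBelt N d s)) (beltState N d s i).2).1 := by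
  simp [corrBelt, beltState, beltState_fst]

theorem beltState_succ_snd (i : ℕ) :
    (beltState N d s (i + 1)).2 =
      (beltStep N d ((List.range i).map (corrBelt N d s)) (beltState N d s i).2).2 := by
  rw [← beltState_fst]
  rfl

theorem countBefore_corrBelt_le (A : α) : ∀ i, countBefore (corrBelt N d s) A i ≤ d A
  | 0 => by simp [countBefore]
  | i + 1 => by
    rw [countBefore_succ]
    split_ifs with h
    · have := count_lt_of_fst_beltStep_eq_some ((corrBelt_eq_fst_beltStep i).symm.trans h)
      rw [count_map_range] at this
      omega
    · simpa using countBefore_corrBelt_le A i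

theorem corrBelt_eq_none {i : ℕ} (h : ∀ B, countBefore (corrBelt N d s) B i = d B) :
    corrBelt N d s i = none := by
  rw [corrBelt_eq_fst_beltStep, beltStep_of_forall_count_eq (by simpa [count_map_range] using h)]

theorem corrBelt_add_eq_some (hN : 0 < N) {j : ℕ} (hj : corrBelt N d s j = some A)
    (hlt : countBefore (corrBelt N d s) A (j + N) < d A) : corrBelt N d s (j + N) = some A := by
  rw [corrBelt_eq_fst_beltStep, beltStep_of_keep (A := A)]
  · simpa [count_map_range] using fun B => countBefore_corrBelt_le B (j + N)
  · simpa [count_map_range] using hlt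
  · simp
  · rw [List.length_map, List.length_range, Nat.add_sub_cancel,
      List.getD_map_range _ _ (by omega), hj]

theorem exists_corrBelt_eq_some {i : ℕ} (hlt : countBefore (corrBelt N d s) A i < d A)
    (hA : A ∈ (beltState N d s i).2) :
    ∃ B, corrBelt N d s i = some B ∧ (B = A ∨ A ∈ (beltState N d s (i + 1)).2) := by
  rw [corrBelt_eq_fst_beltStep, beltState_succ_snd]
  exact exists_fst_beltStep_eq_some
    (by simpa [count_map_range] using fun B => countBefore_corrBelt_le B i)
    (by simpa [count_map_range] using hlt) hA

end CorrBelt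

section Termination

variable [Fintype α] [DecidableEq α] {N : ℕ} {d : α → ℕ} {s : List α} {A : α}

theorem exists_window_or_mem_rest (hN : 0 < N) (hs : A ∈ s) :
    ∀ i, countBefore (corrBelt N d s) A i < d A →
      (∃ j < i, i ≤ j + N ∧ corrBelt N d s j = some A) ∨ A ∈ (beltState N d s i).2
  | 0, _ => Or.inr hs
  | i + 1, hlt => by
    have hlt' : countBefore (corrBelt N d s) A i < d A :=
      (countBefore_mono _ A i.le_succ).trans_lt hlt
    rcases exists_window_or_mem_rest hN hs i hlt' with ⟨j, hji, hij, hj⟩ | hrest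
    · by_cases hij' : i + 1 ≤ j + N
      · exact Or.inl ⟨j, by omega, hij', hj⟩
      · obtain rfl : i = j + N := by omega
        exact Or.inl ⟨j + N, by omega, by omega, corrBelt_add_eq_some hN hj hlt'⟩
    · obtain ⟨B, hB, rfl | hA⟩ := exists_corrBelt_eq_some hlt' hrest
      · exact Or.inl ⟨i, by omega, by omega, hB⟩
      · exact Or.inr hA

theorem sum_countBefore_lt_add (hN : 0 < N) (hs : ∀ B, B ∈ s) {i : ℕ}
    (hlt : countBefore (corrBelt N d s) A i < d A) :
    ∑ B, countBefore (corrBelt N d s) B i < ∑ B, countBefore (corrBelt N d s) B (i + N) := by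
  obtain ⟨B, k, hik, hki, hB⟩ : ∃ B k, i ≤ k ∧ k ≤ i + N ∧
      countBefore (corrBelt N d s) B i < countBefore (corrBelt N d s) B k := by
    rcases exists_window_or_mem_rest hN (hs A) i hlt with ⟨j, hji, hij, hj⟩ | hrest
    · rcases (countBefore_corrBelt_le A (j + N)).lt_or_eq with hlt' | heq
      · refine ⟨A, j + N + 1, by omega, by omega, ?_⟩
        rw [countBefore_succ, if_pos (corrBelt_add_eq_some hN hj hlt')]
        have := countBefore_mono (corrBelt N d s) A hij
        omega
      · exact ⟨A, j + N, hij, by omega, heq ▸ hlt⟩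
    · obtain ⟨B, hB, -⟩ := exists_corrBelt_eq_some hlt hrest
      refine ⟨B, i + 1, by omega, by omega, ?_⟩
      rw [countBefore_succ, if_pos hB]
      omega
  exact (sum_countBefore_lt hik hB).trans_le (sum_le_sum fun C _ => countBefore_mono _ C hki)

theorem min_le_sum_countBefore (hN : 0 < N) (hs : ∀ B, B ∈ s) (k : ℕ) :
    min k (∑ B, d B) ≤ ∑ B, countBefore (corrBelt N d s) B (k * N) := by
  induction k with
  | zero => simp
  | succ k ih =>
    have hmono : ∑ B, countBefore (corrBelt N d s) B (k * N) ≤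
        ∑ B, countBefore (corrBelt N d s) B ((k + 1) * N) :=
      sum_le_sum fun B _ => countBefore_mono _ B (Nat.mul_le_mul_right N k.le_succ)
    by_cases hall : ∀ B, countBefore (corrBelt N d s) B (k * N) = d B
    · have hsum : ∑ B, countBefore (corrBelt N d s) B (k * N) = ∑ B, d B :=
        sum_congr rfl fun B _ => hall B
      omega
    · obtain ⟨A, hA⟩ := not_forall.1 hall
      have := sum_countBefore_lt_add hN hs ((countBefore_corrBelt_le A _).lt_of_ne hA)
      rw [Nat.succ_mul]
      omega

theorem countBefore_corrBelt_eq (hN : 0 < N) (hs : ∀ B, B ∈ s) {i : ℕ}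
    (hi : (∑ B, d B) * N ≤ i) (A : α) : countBefore (corrBelt N d s) A i = d A := by
  have hle : ∀ B, countBefore (corrBelt N d s) B i ≤ d B := fun B => countBefore_corrBelt_le B i
  have hsum : ∑ B, countBefore (corrBelt N d s) B i = ∑ B, d B := by
    refine le_antisymm (sum_le_sum fun B _ => hle B) ?_
    have := min_le_sum_countBefore (d := d) hN hs (∑ B, d B)
    rw [min_self] at this
    exact this.trans (sum_le_sum fun B _ => countBefore_mono _ B hi)
  exact (sum_eq_sum_iff_of_le fun B _ => hle B).1 hsum A (mem_univ A)

theorem lt_of_corrBelt_eq_some (hN : 0 < N) (hs : ∀ B, B ∈ s) {i : ℕ}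
    (h : corrBelt N d s i = some A) : i < (∑ B, d B) * N := by
  by_contra! hi
  rw [corrBelt_eq_none (countBefore_corrBelt_eq hN hs hi)] at h
  cases h

end Termination

instance [DecidableEq α] (N : ℕ) (b : ℕ → Option α) (A : α) : DecidablePred (Injected N b A) :=
  fun _ => inferInstanceAs (Decidable (_ ∧ _))

theorem count_injected_add_count_le [Fintype α] [DecidableEq α] {N : ℕ} {d : α → ℕ}
    {s : List α} (hN : 0 < N) (A : α) : ∀ i,
      Nat.count (Injected N (corrBelt N d s) A) i + (beltState N d s i).2.count A ≤ s.count A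
  | 0 => by simp [beltState]
  | i + 1 => by
    have ih := count_injected_add_count_le (d := d) (s := s) hN A i
    rw [Nat.count_succ, beltState_succ_snd]
    split_ifs with hinj
    · have hsuf := cons_snd_beltStep_suffix ((corrBelt_eq_fst_beltStep i).symm.trans hinj.1) ?_
      · have := hsuf.count_le A
        rw [List.count_cons_self] at this
        omega
      rintro ⟨hNi, hget⟩
      rw [List.length_map, List.length_range] at hNi hget
      rw [List.getD_map_range _ _ (by omega)] at hget
      exact hinj.2.elim (by omega) (· hget)
    · have := (snd_beltStep_suffix (N := N) (d := d) (pre := (List.range i).map (corrBelt N d s))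
        (rem := (beltState N d s i).2)).count_le A
      omega

theorem statement8_general [Fintype α] [DecidableEq α] (N : ℕ) (hN : 0 < N)
    (d c : α → ℕ) (hc : ∀ A, 0 < c A)
    (s : List α) (hs : ∀ A : α, s.count A = c A) :
    IsBeltAssignment N d c (corrBelt N d s) := by
  have hmem : ∀ A, A ∈ s := fun A => List.count_pos_iff.1 (hs A ▸ hc A)
  set M := (∑ A, d A) * N
  have hbound : ∀ {j A}, corrBelt N d s j = some A → j < M := lt_of_corrBelt_eq_some hN hmem
  refine ⟨fun A => (Set.finite_Iio M).subset fun j => hbound, fun A => ?_,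
    fun i A hi => ?_, fun A => ?_⟩
  · have hocc : {j | corrBelt N d s j = some A} = {j | corrBelt N d s j = some A ∧ j < M} :=
      Set.ext fun j => ⟨fun h => ⟨h, hbound h⟩, And.left⟩
    rw [hocc, ncard_setOf_eq_some_and_lt, countBefore_corrBelt_eq hN hmem le_rfl]
  · rw [ncard_setOf_eq_some_and_lt]
    rcases (countBefore_corrBelt_le A (i + N)).lt_or_eq with hlt | heq
    · exact Or.inl (corrBelt_add_eq_some hN hi hlt)
    · exact Or.inr heq
  · have hinj : {j | Injected N (corrBelt N d s) A j} =
        {j | Injected N (corrBelt N d s) A j ∧ j < M} :=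
      Set.ext fun j => ⟨fun h => ⟨h, hbound h.1⟩, And.left⟩
    rw [MouldsUsed, hinj, Set.ncard_setOf_and_lt, ← hs A]
    exact le_of_add_le_left (count_injected_add_count_le hN A M)

/-- The belt function corresponding to any injection sequence (containing
each type `A` exactly `c A` times) is a belt assignment, i.e. it satisfies
conditions (i), (ii) and (iii). -/
theorem statement8 [Fintype α] [DecidableEq α] (N : ℕ) (hN : 0 < N)
    (d c : α → ℕ) (hd : ∀ A, 0 < d A) (hc : ∀ A, 0 < c A)
    (s : List α) (hs : ∀ A : α, s.count A = c A) :
    IsBeltAssignment N d c (corrBelt N d s) :=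
  statement8_general N hN d c hc s hs
end

section
/- 2-factor approximation: if b is a belt assignment satisfying Property (E) and Property (F), then for every belt assignment b' of the same instance, M(b) ≤ 2·M(b'). In particular, the makespan of b is at most twice the optimal makespan. -/
open Finset

variable {α : Type*}

/-! Let `L` be the last occupied step of `b`, of type `A`, and `e` its first empty step. The
steps before `e` are all occupied, so `e ≤ ∑ d ≤ M(b') - N`, which settles the case `L < e`.
Otherwise (F) forces `A` to use all `c_A` moulds, by (E) all of them are injected before `e`, and
each stays on the belt every `N` steps up to `L`: hence `(T + 1) c_A ≤ d_A` for
`T = ⌊(L - e) / N⌋`. In `b'` any `N` consecutive steps hold at most `c_A` occurrences of `A`,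
so `b'` needs more than `N T > L - e - N` steps for them, and `M(b) ≤ L + N + 1 ≤ 2 M(b')`. -/

section Makespan

lemma demand_met_of_forall_lt {N m : ℕ} {d : α → ℕ} {b : ℕ → Option α}
    (hcount : ∀ A, {i | b i = some A}.ncard = d A) (hm : ∀ i A, b i = some A → i < m)
    (A : α) : {j | b j = some A ∧ j < m + N - N}.ncard = d A := by
  rw [← hcount A, Nat.add_sub_cancel]
  congr 1
  ext j
  simpa using hm j A

lemma makespan_le_of_forall_lt {N m : ℕ} {d : α → ℕ} {b : ℕ → Option α}
    (hcount : ∀ A, {i | b i = some A}.ncard = d A) (hm : ∀ i A, b i = some A → i < m) :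
    Makespan N d b ≤ m + N :=
  Nat.sInf_le (demand_met_of_forall_lt hcount hm)

lemma makespan_eq_zero_of_infinite [Infinite α] (N : ℕ) {d : α → ℕ} (hd : ∀ A, 0 < d A)
    (b : ℕ → Option α) : Makespan N d b = 0 := by
  suffices h : {s | ∀ A : α, {j | b j = some A ∧ j < s - N}.ncard = d A} = ∅ by
    rw [Makespan, h, Nat.sInf_empty]
  refine Set.eq_empty_of_forall_notMem fun s hs => ?_
  have hocc (A : α) : ∃ j, b j = some A ∧ j < s - N :=
    Set.nonempty_of_ncard_ne_zero (s := {j | b j = some A ∧ j < s - N})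
      (by rw [hs A]; exact (hd A).ne')
  choose f hfA hfs using hocc
  have hf : Function.Injective f := fun A B h =>
    Option.some_injective _ ((hfA A).symm.trans (h ▸ hfA B))
  exact Set.infinite_of_injective_forall_mem hf hfs (Set.finite_Iio (s - N))

lemma card_filter_range_eq_ncard [DecidableEq α] (b : ℕ → Option α) (A : α) (m : ℕ) :
    #{j ∈ range m | b j = some A} = {j | b j = some A ∧ j < m}.ncard := by
  rw [← Set.ncard_coe_finset]
  congr 1
  ext j
  simp [and_comm]

lemma card_filter_none_add_sum [Fintype α] [DecidableEq α] (b : ℕ → Option α) (m : ℕ) :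
    #{i ∈ range m | b i = none} + ∑ A, #{i ∈ range m | b i = some A} = m := by
  rw [← Fintype.sum_option (fun o => #{i ∈ range m | b i = o}),
    ← card_eq_sum_card_fiberwise (fun i _ => mem_univ (b i)), card_range]

namespace IsBeltAssignment

variable {N : ℕ} {d c : α → ℕ} {b : ℕ → Option α}

lemma exists_forall_lt [Finite α] (hb : IsBeltAssignment N d c b) :
    ∃ m, ∀ i A, b i = some A → i < m := by
  obtain ⟨m, hm⟩ := (Set.finite_iUnion hb.1).bddAbove
  exact ⟨m + 1, fun i A h => Nat.lt_succ_of_le (hm (Set.mem_iUnion_of_mem A h))⟩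

lemma exists_last [Finite α] [Nonempty α] (hb : IsBeltAssignment N d c b) (hd : ∀ A, 0 < d A) :
    ∃ L A, b L = some A ∧ ∀ i B, b i = some B → i ≤ L := by
  obtain ⟨A₀⟩ := ‹Nonempty α›
  have hne : (⋃ A, {i | b i = some A}).Nonempty :=
    (Set.nonempty_of_ncard_ne_zero (by rw [hb.2.1 A₀]; exact (hd A₀).ne')).mono
      (Set.subset_iUnion (fun A => {i | b i = some A}) A₀)
  obtain ⟨L, hL, hmax⟩ := Set.exists_max_image _ id (Set.finite_iUnion hb.1) hne
  obtain ⟨A, hA⟩ := Set.mem_iUnion.1 hL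
  exact ⟨L, A, hA, fun i B h => hmax i (Set.mem_iUnion_of_mem B h)⟩

lemma makespan_spec [Finite α] (hb : IsBeltAssignment N d c b) (A : α) :
    {j | b j = some A ∧ j < Makespan N d b - N}.ncard = d A := by
  obtain ⟨m, hm⟩ := hb.exists_forall_lt
  exact Nat.sInf_mem (s := {s | ∀ A, {j | b j = some A ∧ j < s - N}.ncard = d A})
    ⟨m + N, demand_met_of_forall_lt hb.2.1 hm⟩ A

lemma sum_le_makespan_sub [Fintype α] [DecidableEq α] (hb : IsBeltAssignment N d c b) :
    ∑ A, d A ≤ Makespan N d b - N := by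
  simp_rw [← hb.makespan_spec, ← card_filter_range_eq_ncard]
  exact le_add_self.trans (card_filter_none_add_sum b _).le

lemma le_sum_of_forall_lt_ne_none [Fintype α] [DecidableEq α] (hb : IsBeltAssignment N d c b)
    {e : ℕ} (he : ∀ i < e, b i ≠ none) : e ≤ ∑ A, d A := by
  have hnone : #{i ∈ range e | b i = none} = 0 :=
    card_eq_zero.2 (filter_eq_empty_iff.2 fun i hi => he i (mem_range.1 hi))
  rw [← card_filter_none_add_sum b e, hnone, zero_add]
  refine sum_le_sum fun A _ => ?_
  rw [card_filter_range_eq_ncard, ← hb.2.1 A]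
  exact Set.ncard_le_ncard (fun j hj => hj.1) (hb.1 A)

end IsBeltAssignment

end Makespan

section Chains

variable {N : ℕ} {b : ℕ → Option α} {A : α}

lemma exists_injected_add_mul (hN : 0 < N) {i : ℕ} (hi : b i = some A) :
    ∃ j k, Injected N b A j ∧ i = j + N * k := by
  induction i using Nat.strong_induction_on with
  | _ i ih =>
    by_cases hinj : Injected N b A i
    · exact ⟨i, 0, hinj, by simp⟩
    · simp only [Injected, hi, true_and, not_or, not_lt, ne_eq, not_not] at hinj
      obtain ⟨j, k, hj, hk⟩ := ih (i - N) (by omega) hinj.2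
      exact ⟨j, k + 1, hj, by rw [Nat.mul_succ]; omega⟩

lemma ncard_window_le_mouldsUsed (hN : 0 < N) (hfin : {i | b i = some A}.Finite) (w : ℕ) :
    {i | b i = some A ∧ w ≤ i ∧ i < w + N}.ncard ≤ MouldsUsed N b A := by
  choose! r k hr hrk using fun i (hi : b i = some A) => exists_injected_add_mul hN hi
  refine Set.ncard_le_ncard_of_injOn r (fun i hi => hr i hi.1) ?_ (hfin.subset fun i hi => hi.1)
  -- steps of the window traced back to the same injection differ by a multiple of `N` below `N`
  rintro x ⟨hxA, hwx, hxw⟩ y ⟨hyA, hwy, hyw⟩ hxy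
  have hx' := hrk x hxA
  have hy' := hrk y hyA
  rcases lt_trichotomy (k x) (k y) with h | h | h
  · have := Nat.mul_le_mul_left N (Nat.succ_le_of_lt h)
    rw [Nat.mul_succ] at this
    omega
  · rw [h] at hx'
    omega
  · have := Nat.mul_le_mul_left N (Nat.succ_le_of_lt h)
    rw [Nat.mul_succ] at this
    omega

lemma ncard_lt_mul_le_mul_mouldsUsed (hN : 0 < N) (hfin : {i | b i = some A}.Finite) (T : ℕ) :
    {i | b i = some A ∧ i < N * T}.ncard ≤ T * MouldsUsed N b A := by
  induction T with
  | zero => simp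
  | succ T ih =>
    have hsplit : {i | b i = some A ∧ i < N * (T + 1)} ⊆
        {i | b i = some A ∧ i < N * T} ∪
          {i | b i = some A ∧ N * T ≤ i ∧ i < N * T + N} := by
      rintro i ⟨hi, hlt⟩
      rw [Nat.mul_succ] at hlt
      by_cases h : i < N * T
      exacts [Or.inl ⟨hi, h⟩, Or.inr ⟨hi, by omega, hlt⟩]
    calc _ ≤ _ := Set.ncard_le_ncard hsplit
          ((hfin.subset fun i hi => hi.1).union (hfin.subset fun i hi => hi.1))
      _ ≤ _ := Set.ncard_union_le _ _
      _ ≤ T * MouldsUsed N b A + MouldsUsed N b A :=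
          add_le_add ih (ncard_window_le_mouldsUsed hN hfin _)
      _ = (T + 1) * MouldsUsed N b A := by ring

namespace IsBeltAssignment

variable {d c : α → ℕ} {L : ℕ}

lemma apply_add_eq (hb : IsBeltAssignment N d c b) (hL : b L = some A) {i : ℕ}
    (hi : b i = some A) (hiL : i + N ≤ L) : b (i + N) = some A := by
  refine (hb.2.2.1 i A hi).resolve_right fun hdone => ?_
  have hall : {j | b j = some A ∧ j < i + N} = {j | b j = some A} :=
    Set.eq_of_subset_of_ncard_le (fun j hj => hj.1) (by rw [hdone, hb.2.1]) (hb.1 A)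
  have : L ∈ {j | b j = some A ∧ j < i + N} := hall ▸ hL
  exact absurd this.2 (by omega)

lemma apply_add_mul_eq (hb : IsBeltAssignment N d c b) (hL : b L = some A) {i : ℕ}
    (hi : b i = some A) {k : ℕ} (hk : i + N * k ≤ L) : b (i + N * k) = some A := by
  induction k with
  | zero => simpa using hi
  | succ k ih =>
    rw [Nat.mul_succ, ← add_assoc] at hk ⊢
    exact hb.apply_add_eq hL (ih (by omega)) hk

lemma eq_of_add_mul_eq (hb : IsBeltAssignment N d c b) (hL : b L = some A) {j j' k k' : ℕ}
    (hj : Injected N b A j) (hj' : Injected N b A j') (h : j + N * k = j' + N * k')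
    (hle : j + N * k ≤ L) : j = j' := by
  wlog hlt : j < j' generalizing j j' k k'
  · rcases (not_lt.1 hlt).lt_or_eq with h' | h'
    · exact (this hj' hj h.symm (h ▸ hle) h').symm
    · exact h'.symm
  -- the chain of `j` passes through `j' - N`, so no mould is injected at `j'`
  exfalso
  obtain ⟨m, rfl⟩ : ∃ m, k = k' + m + 1 := by
    refine ⟨k - k' - 1, ?_⟩
    by_contra hk
    have := Nat.mul_le_mul_left N (show k ≤ k' by omega)
    omega
  have hNk : N * (k' + m + 1) = N * k' + N * m + N := by ring
  have hprev : b (j + N * m) = some A := hb.apply_add_mul_eq hL hj.1 (by omega)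
  rcases hj'.2 with hj'N | hj'prev
  · omega
  · exact hj'prev (by rw [show j' - N = j + N * m by omega]; exact hprev)

lemma succ_mul_mouldsUsed_le (hN : 0 < N) (hb : IsBeltAssignment N d c b) (hL : b L = some A)
    {T : ℕ} (hT : ∀ j, Injected N b A j → j + N * T ≤ L) :
    (T + 1) * MouldsUsed N b A ≤ d A := by
  have hIfin : {j | Injected N b A j}.Finite := (hb.1 A).subset fun j hj => hj.1
  rw [MouldsUsed, Set.ncard_eq_toFinset_card _ hIfin, ← hb.2.1 A,
    Set.ncard_eq_toFinset_card _ (hb.1 A), mul_comm, ← card_range (T + 1), ← card_product]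
  have hbound {j k : ℕ} (hj : Injected N b A j) (hk : k < T + 1) : j + N * k ≤ L := by
    have := Nat.mul_le_mul_left N (Nat.lt_succ_iff.1 hk)
    have := hT j hj
    omega
  refine card_le_card_of_injOn (fun p => p.1 + N * p.2) ?_ ?_
  · rintro ⟨j, k⟩ hp
    simp only [coe_product, Set.mem_prod, Set.Finite.coe_toFinset, coe_range, Set.mem_Iio] at hp
    simp only [Set.Finite.coe_toFinset]
    exact hb.apply_add_mul_eq hL hp.1.1 (hbound hp.1 hp.2)
  · rintro ⟨j, k⟩ hp ⟨j', k'⟩ hp' h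
    simp only [coe_product, Set.mem_prod, Set.Finite.coe_toFinset, coe_range, Set.mem_Iio] at hp hp'
    obtain rfl := hb.eq_of_add_mul_eq hL hp.1 hp'.1 h (hbound hp.1 hp.2)
    simp only [Nat.add_left_cancel_iff] at h
    rw [Nat.eq_of_mul_eq_mul_left hN h]

lemma mul_lt_makespan_sub [Finite α] (hN : 0 < N) (hb : IsBeltAssignment N d c b)
    (hc : 0 < c A) {T : ℕ} (hT : (T + 1) * c A ≤ d A) : N * T < Makespan N d b - N := by
  by_contra! h
  have : d A ≤ T * c A := calc
    d A = {i | b i = some A ∧ i < Makespan N d b - N}.ncard := (hb.makespan_spec A).symm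
    _ ≤ {i | b i = some A ∧ i < N * T}.ncard :=
        Set.ncard_le_ncard (fun i ⟨hiA, hi⟩ => ⟨hiA, by omega⟩)
          ((hb.1 A).subset fun i hi => hi.1)
    _ ≤ T * MouldsUsed N b A := ncard_lt_mul_le_mul_mouldsUsed hN (hb.1 A) T
    _ ≤ T * c A := Nat.mul_le_mul_left _ (hb.2.2.2 A)
  nlinarith

end IsBeltAssignment

end Chains

/-- **Observation 6 (2-factor approximation).** A belt assignment satisfying
Properties (E) and (F) has makespan at most twice that of any belt
assignment of the same instance; in particular at most twice the optimum. -/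
theorem statement10 (N : ℕ) (hN : 0 < N)
    (d c : α → ℕ) (hd : ∀ A, 0 < d A) (hc : ∀ A, 0 < c A)
    (b b' : ℕ → Option α) (hb : IsBeltAssignment N d c b)
    (hE : PropE N b) (hF : PropF N c b)
    (hb' : IsBeltAssignment N d c b') :
    Makespan N d b ≤ 2 * Makespan N d b' := by
  classical
  cases finite_or_infinite α
  swap
  · simp [makespan_eq_zero_of_infinite N hd]
  cases isEmpty_or_nonempty α
  · simp [Makespan]
  have := Fintype.ofFinite α
  obtain ⟨L, A, hLA, hLmax⟩ := hb.exists_last hd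
  have hMb : Makespan N d b ≤ L + 1 + N :=
    makespan_le_of_forall_lt hb.2.1 fun i B h => Nat.lt_succ_of_le (hLmax i B h)
  have hDs := hb'.sum_le_makespan_sub
  have hex : ∃ e, b e = none :=
    ⟨L + 1, Option.eq_none_iff_forall_ne_some.2 fun B h => by have := hLmax _ _ h; omega⟩
  obtain ⟨e, he, hfull⟩ : ∃ e, b e = none ∧ ∀ i < e, b i ≠ none :=
    ⟨Nat.find hex, Nat.find_spec hex, fun i => Nat.find_min hex⟩
  have heD : e ≤ ∑ A, d A := hb.le_sum_of_forall_lt_ne_none hfull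
  rcases lt_or_ge L e with hLe | heL
  · omega
  obtain ⟨T, hTle, hTlt⟩ : ∃ T, N * T ≤ L - e ∧ L - e < N * T + N :=
    ⟨(L - e) / N, Nat.mul_div_le _ _, by simpa [mul_add] using Nat.lt_mul_div_succ (L - e) hN⟩
  have hcA : c A ≤ MouldsUsed N b A := not_lt.1 fun h => hF e A he h L heL hLA
  have hbT : (T + 1) * c A ≤ d A :=
    (Nat.mul_le_mul_left _ hcA).trans <| hb.succ_mul_mouldsUsed_le hN hLA fun j hj => by
      have := hE A j e hj he
      omega
  have hb'T := hb'.mul_lt_makespan_sub hN (hc A) hbT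
  omega
end
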